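/- arXiv:1201.5019 — 3 statements merged into one kernel-verified Lean document; each statement's English description precedes it below -/
import Mathlib

section
/- Let A be a totally unimodular real m×n matrix, k ∈ {1,…,m}, and I ⊆ {1,…,m} with k ∉ I. If θ* = (x₊*, x₋*, y₊*, y₋*) is an extreme point of the standard-form LP polyhedron Q that minimizes the LP objective c over Q, then x*(i) := x₊*(i) − x₋*(i) ∈ {−1, 0, 1} for every i ∈ {1,…,n}, and |A(j,:)x*| ∈ {0, 1} for every j ∈ Ī. -/
open Matrix

/-- The feasible set `F = {x : A(k,:)x = 1, A(i,:)x = 0 for i ∈ I}`. -/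
def feasSet {m n : ℕ} (A : Matrix (Fin m) (Fin n) ℝ) (k : Fin m) (I : Finset (Fin m)) :
    Set (Fin n → ℝ) :=
  {x | A k ⬝ᵥ x = 1 ∧ ∀ i ∈ I, A i ⬝ᵥ x = 0}

open Classical in
/-- The l0 objective `‖A(Ī,:)x‖₀`: number of indices `i ∉ I` with `A(i,:)x ≠ 0`. -/
noncomputable def l0Obj {m n : ℕ} (A : Matrix (Fin m) (Fin n) ℝ) (I : Finset (Fin m))
    (x : Fin n → ℝ) : ℕ :=
  (Iᶜ.filter (fun i => A i ⬝ᵥ x ≠ 0)).card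

/-- Points `(x₊, x₋, y₊, y₋)` of the standard-form LP. -/
abbrev LPPoint (m n : ℕ) (I : Finset (Fin m)) : Type :=
  (Fin n → ℝ) × (Fin n → ℝ) × ({i : Fin m // i ∉ I} → ℝ) × ({i : Fin m // i ∉ I} → ℝ)

/-- The standard-form LP polyhedron `Q`. -/
def lpQ {m n : ℕ} (A : Matrix (Fin m) (Fin n) ℝ) (k : Fin m) (I : Finset (Fin m)) :
    Set (LPPoint m n I) :=
  {θ | 0 ≤ θ.1 ∧ 0 ≤ θ.2.1 ∧ 0 ≤ θ.2.2.1 ∧ 0 ≤ θ.2.2.2 ∧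
    (∀ j : {i : Fin m // i ∉ I}, A j.1 ⬝ᵥ (θ.1 - θ.2.1) = θ.2.2.1 j - θ.2.2.2 j) ∧
    A k ⬝ᵥ (θ.1 - θ.2.1) = 1 ∧
    ∀ i ∈ I, A i ⬝ᵥ (θ.1 - θ.2.1) = 0}

/-- The LP objective `c(x₊,x₋,y₊,y₋) = Σ_{i∈Ī} (y₊(i) + y₋(i))`. -/
noncomputable def lpObj {m n : ℕ} (I : Finset (Fin m)) (θ : LPPoint m n I) : ℝ :=
  ∑ j : {i : Fin m // i ∉ I}, (θ.2.2.1 j + θ.2.2.2 j)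

/-!
Stack the constraints of `Q` as `M z = e`, `z ≥ 0`, where `z = (x₊, y₋, x₋, y₊)` and
`M = [C | -C]`, `C = [B | E]`, with `B` the rows of `A` indexed by `Ī`, `I` and `k`, and `E`
the unit columns of the `Ī` rows; `M` is totally unimodular. At an extreme point the columns of
`M` on the support of `z` are linearly independent, so they contain an invertible square
submatrix `T`, of determinant `±1`. By Cramer's rule each entry of `z` on the support is
`det T⁻¹` times the determinant of a square submatrix of the totally unimodular `[M | 1]`
(the right-hand side `e` is a unit vector), hence lies in `{-1, 0, 1}`; being positive it is `1`.
So `x₊, x₋, y₊, y₋` are `0/1` vectors, and `x = x₊ - x₋`, `A(Ī,:)x = y₊ - y₋` follow.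
-/

lemma SignType.range_cast_eq_mrange {R : Type*} [CommRing R] :
    Set.range (SignType.cast : SignType → R) =
      MonoidHom.mrange (SignType.castHom : SignType →*₀ R) := by
  ext; simp

lemma mul_self_eq_one_of_isUnit_of_mem_range_signTypeCast {R : Type*} [CommRing R] {a : R}
    (hunit : IsUnit a) (ha : a ∈ Set.range SignType.cast) : a * a = 1 := by
  obtain ⟨s, rfl⟩ := ha
  cases s
  · simpa using isUnit_zero_iff.mp hunit
  · simp
  · simp

lemma sub_mem_of_mem_zero_one {R : Type*} [Ring R] {a b : R} (ha : a ∈ ({0, 1} : Set R))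
    (hb : b ∈ ({0, 1} : Set R)) : a - b ∈ ({-1, 0, 1} : Set R) := by
  rcases ha with rfl | rfl <;> rcases hb with rfl | rfl <;> simp

lemma abs_sub_mem_of_mem_zero_one {R : Type*} [Ring R] [LinearOrder R] [IsOrderedRing R] {a b : R}
    (ha : a ∈ ({0, 1} : Set R)) (hb : b ∈ ({0, 1} : Set R)) : |a - b| ∈ ({0, 1} : Set R) := by
  rcases ha with rfl | rfl <;> rcases hb with rfl | rfl <;> simp

lemma exists_pos_mul_abs_le {κ K : Type*} [Fintype κ] [Field K] [LinearOrder K]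
    [IsStrictOrderedRing K] {z d : κ → K} (hz : 0 ≤ z) (hdz : ∀ c, z c = 0 → d c = 0) :
    ∃ ε > 0, ∀ c, ε * |d c| ≤ z c := by
  rcases isEmpty_or_nonempty κ with hκ | hκ
  · exact ⟨1, one_pos, isEmptyElim⟩
  let r c := if d c = 0 then 1 else z c / |d c|
  have hr : ∀ c, 0 < r c := fun c => by
    by_cases hc : d c = 0
    · simp [r, hc]
    · have : 0 < z c := (hz c).lt_of_ne' fun h => hc (hdz c h)
      simp only [r, hc, if_false]; positivity
  refine ⟨Finset.univ.inf' Finset.univ_nonempty r,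
    (Finset.lt_inf'_iff _).mpr fun c _ => hr c, fun c => ?_⟩
  by_cases hc : d c = 0
  · simpa [hc] using hz c
  · calc Finset.univ.inf' Finset.univ_nonempty r * |d c| ≤ r c * |d c| := by
          gcongr; exact Finset.inf'_le _ (Finset.mem_univ c)
      _ = z c := by simp [r, hc]

namespace Matrix

section TotallyUnimodular

variable {ι ρ κ R : Type*} [CommRing R]

lemma IsTotallyUnimodular.det_submatrix_mem_range [Fintype ι] [DecidableEq ι]
    {M : Matrix ρ κ R} (hM : M.IsTotallyUnimodular) (f : ι → ρ) (g : ι → κ) :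
    (M.submatrix f g).det ∈ Set.range SignType.cast :=
  (isTotallyUnimodular_iff_fintype M).mp hM ι f g

lemma IsTotallyUnimodular.mul_diagonal [Fintype κ] [DecidableEq κ] {A : Matrix ρ κ R}
    (hA : A.IsTotallyUnimodular) {d : κ → R} (hd : ∀ j, d j ∈ Set.range SignType.cast) :
    (A * diagonal d).IsTotallyUnimodular := by
  intro k f g hf hg
  have : (A * diagonal d).submatrix f g = A.submatrix f g * diagonal (d ∘ g) := by
    ext; simp
  rw [this, det_mul, det_diagonal, SignType.range_cast_eq_mrange]
  exact mul_mem (by simpa [SignType.range_cast_eq_mrange] using hA k f g hf hg)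
    (prod_mem fun i _ => by simpa [SignType.range_cast_eq_mrange] using hd (g i))

lemma IsTotallyUnimodular.fromCols_neg [Fintype κ] [DecidableEq κ] {A : Matrix ρ κ R}
    (hA : A.IsTotallyUnimodular) : (fromCols A (-A)).IsTotallyUnimodular := by
  have : fromCols A (-A) =
      A.submatrix id (Sum.elim id id) * diagonal (Sum.elim 1 (-1) : κ ⊕ κ → R) := by
    ext i (j | j) <;> simp
  rw [this]
  refine (hA.submatrix _ _).mul_diagonal fun j => ?_
  rcases j with j | j
  · exact ⟨1, by simp⟩
  · exact ⟨-1, by simp⟩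

/-- By Cramer's rule, `det T * x s` with `T = M.submatrix f g` is the determinant of a square
submatrix of `[M | 1]`, and `det T = ±1`. -/
lemma IsTotallyUnimodular.apply_mem_range_of_submatrix_mulVec_eq [Fintype ι] [DecidableEq ι]
    [DecidableEq ρ] {M : Matrix ρ κ R} (hM : M.IsTotallyUnimodular) {f : ι → ρ} {g : ι → κ}
    (hdet : IsUnit (M.submatrix f g).det) {p : ρ} {x : ι → R}
    (hx : M.submatrix f g *ᵥ x = Pi.single p (1 : R) ∘ f) (s : ι) :
    x s ∈ Set.range SignType.cast := by
  set T := M.submatrix f g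
  have hcramer : T.det * x s = (T.updateCol s (Pi.single p (1 : R) ∘ f)).det := by
    rw [← cramer_apply, ← hx, cramer_eq_adjugate_mulVec, mulVec_mulVec, adjugate_mul,
      smul_mulVec, one_mulVec, Pi.smul_apply, smul_eq_mul]
  have hcol : T.updateCol s (Pi.single p (1 : R) ∘ f) =
      (fromCols M 1).submatrix f (fun t => if t = s then .inr p else .inl (g t)) := by
    ext i t
    by_cases ht : t = s
    · subst ht; simp [one_apply, Pi.single_apply]
    · simp [ht, T]
  have hsq : T.det * T.det = 1 :=
    mul_self_eq_one_of_isUnit_of_mem_range_signTypeCast hdet (hM.det_submatrix_mem_range f g)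
  rw [← one_mul (x s), ← hsq, mul_assoc, hcramer, hcol, SignType.range_cast_eq_mrange]
  exact mul_mem (by simpa [SignType.range_cast_eq_mrange] using hM.det_submatrix_mem_range f g)
    (by simpa [SignType.range_cast_eq_mrange] using
      hM.fromCols_one.det_submatrix_mem_range f _)

end TotallyUnimodular

lemma exists_isUnit_submatrix_of_mulVec_injective {ρ σ K : Type*} [Field K] [Fintype ρ]
    [Fintype σ] [DecidableEq σ] {N : Matrix ρ σ K} (hN : Function.Injective N.mulVec) :
    ∃ f : σ → ρ, IsUnit (N.submatrix f id) := by
  obtain ⟨ι, a, ha, hspan, hli⟩ := exists_linearIndependent' K N.row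
  have : Fintype ι := Fintype.ofInjective a ha
  have hrank : N.rank = Fintype.card σ := by
    rw [rank, LinearMap.finrank_range_of_inj hN, Module.finrank_fintype_fun_eq_card]
  have hcard : Fintype.card ι = Fintype.card σ := by
    rw [linearIndependent_iff_card_eq_finrank_span.mp hli, Set.finrank, hspan,
      ← rank_eq_finrank_span_row, hrank]
  let e : σ ≃ ι := Fintype.equivOfCardEq hcard.symm
  exact ⟨a ∘ e, linearIndependent_rows_iff_isUnit.mp (hli.comp e e.injective)⟩

lemma mulVec_eq_submatrix_mulVec_of_support {ρ κ R : Type*} [Semiring R] [Fintype κ]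
    (M : Matrix ρ κ R) {p : κ → Prop} [DecidablePred p] {w : κ → R}
    (hw : ∀ c, ¬ p c → w c = 0) :
    M *ᵥ w = M.submatrix id (Subtype.val : Subtype p → κ) *ᵥ (w ∘ Subtype.val) := by
  ext r
  simp only [mulVec, dotProduct, submatrix_apply, id, Function.comp_apply]
  rw [← Fintype.sum_subtype_add_sum_subtype p,
    Fintype.sum_eq_zero (fun c : {c // ¬ p c} => M r c * w c) fun c => by rw [hw c c.2, mul_zero],
    add_zero]

section ExtremePoints

variable {ρ κ K : Type*} [Fintype κ] [Field K] [LinearOrder K] [IsStrictOrderedRing K]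

lemma eq_zero_of_mulVec_eq_zero_of_mem_extremePoints {M : Matrix ρ κ K} {b : ρ → K}
    {z : κ → K} (hz : z ∈ Set.extremePoints K {x | 0 ≤ x ∧ M *ᵥ x = b}) {d : κ → K}
    (hdz : ∀ c, z c = 0 → d c = 0) (hd : M *ᵥ d = 0) : d = 0 := by
  obtain ⟨⟨hz0, hMz⟩, hext⟩ := hz
  obtain ⟨ε, hε, hεd⟩ := exists_pos_mul_abs_le hz0 hdz
  have hmem : ∀ t : K, |t| ≤ ε → z + t • d ∈ {x | 0 ≤ x ∧ M *ᵥ x = b} := fun t ht => by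
    refine ⟨fun c => ?_, by rw [mulVec_add, mulVec_smul, hd, smul_zero, add_zero, hMz]⟩
    have : |t * d c| ≤ z c := by
      rw [abs_mul]; exact (mul_le_mul_of_nonneg_right ht (abs_nonneg _)).trans (hεd c)
    simp only [Pi.zero_apply, Pi.add_apply, Pi.smul_apply, smul_eq_mul]
    linarith [neg_abs_le (t * d c)]
  have hseg : z ∈ openSegment K (z + ε • d) (z + (-ε) • d) :=
    ⟨1 / 2, 1 / 2, by norm_num, by norm_num, by norm_num, by module⟩
  have := hext (hmem ε (abs_of_pos hε).le) (hmem (-ε) (by rw [abs_neg, abs_of_pos hε])) hseg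
  simpa [hε.ne'] using this

lemma IsTotallyUnimodular.mem_zero_one_of_mem_extremePoints [Fintype ρ] [DecidableEq ρ]
    {M : Matrix ρ κ K} (hM : M.IsTotallyUnimodular) {p : ρ} {z : κ → K}
    (hz : z ∈ Set.extremePoints K {x | 0 ≤ x ∧ M *ᵥ x = Pi.single p 1}) (c : κ) :
    z c ∈ ({0, 1} : Set K) := by
  classical
  let N := M.submatrix id (Subtype.val : {c // z c ≠ 0} → κ)
  have hsupp : ∀ w : κ → K, (∀ c, z c = 0 → w c = 0) → M *ᵥ w = N *ᵥ (w ∘ Subtype.val) :=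
    fun w hw => M.mulVec_eq_submatrix_mulVec_of_support (p := fun c => z c ≠ 0)
      fun c hc => hw c (not_not.mp hc)
  have hN : Function.Injective N.mulVec := by
    refine (injective_iff_map_eq_zero N.mulVecLin).mpr fun w hw => ?_
    let d : κ → K := fun c => if h : z c = 0 then 0 else w ⟨c, h⟩
    have hdz : ∀ c, z c = 0 → d c = 0 := fun c hc => by simp [d, hc]
    have hdw : d ∘ Subtype.val = w := funext fun s => by simp [d, s.2]
    have hd := eq_zero_of_mulVec_eq_zero_of_mem_extremePoints hz hdz
      (by rw [hsupp d hdz, hdw]; exact hw)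
    rw [← hdw, hd]; rfl
  obtain ⟨f, hf⟩ := exists_isUnit_submatrix_of_mulVec_injective hN
  have hx : N.submatrix f id *ᵥ (z ∘ Subtype.val) = Pi.single p (1 : K) ∘ f := by
    ext i
    rw [← hz.1.2, hsupp z fun _ h => h]
    rfl
  by_cases hc : z c = 0
  · exact .inl hc
  obtain ⟨s, hs⟩ := hM.apply_mem_range_of_submatrix_mulVec_eq
    ((isUnit_iff_isUnit_det _).mp hf) hx ⟨c, hc⟩
  change (s : K) = z c at hs
  cases s with
  | zero => exact absurd (by simpa using hs.symm) hc
  | neg => exact absurd (hz.1.1 c) (by rw [← hs]; norm_num)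
  | pos => exact .inr (by simpa using hs.symm)

end ExtremePoints

end Matrix

section StandardForm

variable {m n : ℕ}

abbrev LPRow (I : Finset (Fin m)) : Type := {i : Fin m // i ∉ I} ⊕ ({i : Fin m // i ∈ I} ⊕ Unit)

abbrev LPCol (n : ℕ) (I : Finset (Fin m)) : Type :=
  (Fin n ⊕ {i : Fin m // i ∉ I}) ⊕ (Fin n ⊕ {i : Fin m // i ∉ I})

/-- Row `k` is used twice: as a row of `Ī`, where it defines `y`, and as the normalisation row. -/
def lpRowIndex (k : Fin m) (I : Finset (Fin m)) : LPRow I → Fin m :=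
  Sum.elim Subtype.val (Sum.elim Subtype.val fun _ => k)

/-- The columns are ordered `(x₊, y₋ | x₋, y₊)`, so that the matrix is `[C | -C]`. -/
def lpMatrix (A : Matrix (Fin m) (Fin n) ℝ) (k : Fin m) (I : Finset (Fin m)) :
    Matrix (LPRow I) (LPCol n I) ℝ :=
  let C := fromCols (A.submatrix (lpRowIndex k I) id) (fromRows 1 0)
  fromCols C (-C)

def lpVec (I : Finset (Fin m)) : LPPoint m n I ≃ₗ[ℝ] (LPCol n I → ℝ) where
  toFun θ := Sum.elim (Sum.elim θ.1 θ.2.2.2) (Sum.elim θ.2.1 θ.2.2.1)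
  invFun z := (fun i => z (.inl (.inl i)), fun i => z (.inr (.inl i)),
    fun j => z (.inr (.inr j)), fun j => z (.inl (.inr j)))
  map_add' _ _ := by ext ((_ | _) | (_ | _)) <;> rfl
  map_smul' _ _ := by ext ((_ | _) | (_ | _)) <;> rfl
  left_inv _ := rfl
  right_inv _ := by ext ((_ | _) | (_ | _)) <;> rfl

lemma lpVec_apply {I : Finset (Fin m)} (θ : LPPoint m n I) :
    lpVec I θ = Sum.elim (Sum.elim θ.1 θ.2.2.2) (Sum.elim θ.2.1 θ.2.2.1) :=
  rfl

lemma isTotallyUnimodular_lpMatrix {A : Matrix (Fin m) (Fin n) ℝ} (hA : A.IsTotallyUnimodular)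
    (k : Fin m) (I : Finset (Fin m)) : (lpMatrix A k I).IsTotallyUnimodular := by
  refine IsTotallyUnimodular.fromCols_neg ?_
  rw [← transpose_isTotallyUnimodular_iff, transpose_fromCols, transpose_fromRows]
  refine (hA.submatrix _ _).transpose.fromRows_unitlike fun _ j => ⟨.inl j, 1, ?_⟩
  ext (i | i) <;> simp [Pi.single_apply, one_apply, eq_comm]

lemma lpMatrix_mulVec_lpVec (A : Matrix (Fin m) (Fin n) ℝ) (k : Fin m) (I : Finset (Fin m))
    (θ : LPPoint m n I) :
    lpMatrix A k I *ᵥ lpVec I θ =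
      A.submatrix (lpRowIndex k I) id *ᵥ (θ.1 - θ.2.1) - Sum.elim (θ.2.2.1 - θ.2.2.2) 0 := by
  rw [lpVec_apply, lpMatrix, fromCols_mulVec_sumElim, neg_mulVec, fromCols_mulVec_sumElim,
    fromCols_mulVec_sumElim, fromRows_mulVec, fromRows_mulVec]
  ext (j | i) <;> simp [mulVec_sub] <;> ring

lemma mem_lpQ_iff (A : Matrix (Fin m) (Fin n) ℝ) (k : Fin m) (I : Finset (Fin m))
    (θ : LPPoint m n I) :
    θ ∈ lpQ A k I ↔
      0 ≤ lpVec I θ ∧ lpMatrix A k I *ᵥ lpVec I θ = Pi.single (.inr (.inr ())) 1 := by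
  rw [lpMatrix_mulVec_lpVec, funext_iff]
  simp [lpQ, lpVec_apply, Sum.forall, Pi.le_def, lpRowIndex, Pi.single_apply, mulVec,
    dotProduct_sub, sub_eq_zero]
  tauto

lemma image_lpVec_lpQ (A : Matrix (Fin m) (Fin n) ℝ) (k : Fin m) (I : Finset (Fin m)) :
    lpVec I '' lpQ A k I =
      {z | 0 ≤ z ∧ lpMatrix A k I *ᵥ z = Pi.single (.inr (.inr ())) 1} := by
  ext z
  rw [← (lpVec I).apply_symm_apply z, (lpVec I).injective.mem_set_image, mem_lpQ_iff]
  rfl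

end StandardForm

theorem stmt1_general {m n : ℕ} (A : Matrix (Fin m) (Fin n) ℝ) (hA : A.IsTotallyUnimodular)
    (k : Fin m) (I : Finset (Fin m))
    (θ : LPPoint m n I)
    (hext : θ ∈ Set.extremePoints ℝ (lpQ A k I)) :
    (∀ i : Fin n, θ.1 i - θ.2.1 i ∈ ({-1, 0, 1} : Set ℝ)) ∧
      ∀ j : {i : Fin m // i ∉ I}, |A j.1 ⬝ᵥ (θ.1 - θ.2.1)| ∈ ({0, 1} : Set ℝ) := by
  have hvec : lpVec I θ ∈ Set.extremePoints ℝ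
      {z | 0 ≤ z ∧ lpMatrix A k I *ᵥ z = Pi.single (.inr (.inr ())) 1} := by
    rw [← image_lpVec_lpQ, ← image_extremePoints]
    exact Set.mem_image_of_mem _ hext
  have h01 := (isTotallyUnimodular_lpMatrix hA k I).mem_zero_one_of_mem_extremePoints hvec
  obtain ⟨-, -, -, -, hy, -⟩ := hext.1
  refine ⟨fun i => sub_mem_of_mem_zero_one (h01 (.inl (.inl i))) (h01 (.inr (.inl i))),
    fun j => ?_⟩
  rw [hy j]
  exact abs_sub_mem_of_mem_zero_one (h01 (.inr (.inr j))) (h01 (.inl (.inr j)))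

/-- If `θ* = (x₊*, x₋*, y₊*, y₋*)` is an extreme point of `Q` minimizing the LP objective,
then every entry of `x* = x₊* − x₋*` is in `{−1,0,1}` and `|A(j,:)x*| ∈ {0,1}` for `j ∈ Ī`. -/
theorem stmt1 {m n : ℕ} (A : Matrix (Fin m) (Fin n) ℝ) (hA : A.IsTotallyUnimodular)
    (k : Fin m) (I : Finset (Fin m)) (hk : k ∉ I)
    (θ : LPPoint m n I)
    (hext : θ ∈ Set.extremePoints ℝ (lpQ A k I))
    (hopt : ∀ θ' ∈ lpQ A k I, lpObj I θ ≤ lpObj I θ') :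
    (∀ i : Fin n, θ.1 i - θ.2.1 i ∈ ({-1, 0, 1} : Set ℝ)) ∧
      ∀ j : {i : Fin m // i ∉ I}, |A j.1 ⬝ᵥ (θ.1 - θ.2.1)| ∈ ({0, 1} : Set ℝ) :=
  stmt1_general A hA k I θ hext
end

section
/- Let A be a totally unimodular real m×n matrix, k ∈ {1,…,m}, and I ⊆ {1,…,m} with k ∉ I, and suppose the feasible set F is nonempty. Then there exists x* ∈ F with ‖A x*‖_∞ ≤ 1 that minimizes the l0 objective ‖A(Ī,:)x‖₀ over all of F; consequently the minimum of ‖A(Ī,:)x‖₀ over F equals the minimum of ‖A(Ī,:)x‖₀ over {x ∈ F : ‖A x‖_∞ ≤ 1}. -/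
/-!
Take an l0-minimizer `x₀` on `F` and let `S` be its zero rows together with row `k`. Choose a
nonsingular square submatrix `B = A(T, J)` with `T ⊆ S` whose rows span the rows of `A(S,:)`,
and let `x` solve `B y = A(T,:) x₀` on the columns `J`, vanishing elsewhere. Then `x` agrees
with `x₀` on all rows of `S`, so it lies in `F` and keeps every zero of `x₀`. By Cramer's rule
each `A(i,:)x` is a combination of the right-hand side with coefficients
`det(B with one row replaced by A(i,J)) / det B ∈ {-1, 0, 1}`; since the right-hand side has
l1-norm `|A(k,:)x₀| = 1`, this gives `‖Ax‖_∞ ≤ 1`.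
-/

open Matrix

namespace Matrix

theorem exists_isUnit_det_submatrix_of_linearIndependent {K ι n : Type*} [Field K] [Fintype ι]
    [DecidableEq ι] [Fintype n] (M : Matrix ι n K) (hM : LinearIndependent K M.row) :
    ∃ g : ι → n, IsUnit (M.submatrix id g).det := by
  obtain ⟨κ, a, ha, hspan, hli⟩ := exists_linearIndependent' K M.col
  have : Fintype κ := Fintype.ofInjective a ha
  have hcard : Fintype.card ι = Fintype.card κ := by
    rw [← hM.rank_matrix, rank_eq_finrank_span_cols, ← hspan, finrank_span_eq_card hli]
  refine ⟨a ∘ Fintype.equivOfCardEq hcard, ?_⟩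
  rw [← isUnit_iff_isUnit_det, ← linearIndependent_cols_iff_isUnit]
  exact hli.comp _ (Fintype.equivOfCardEq hcard).injective

variable {m n R : Type*} [CommRing R] [LinearOrder R] [IsStrictOrderedRing R]

theorem IsTotallyUnimodular.abs_det_submatrix_le_one {A : Matrix m n R}
    (hA : A.IsTotallyUnimodular) {ι : Type*} [Fintype ι] [DecidableEq ι] (f : ι → m)
    (g : ι → n) : |(A.submatrix f g).det| ≤ 1 := by
  obtain ⟨s, hs⟩ := (isTotallyUnimodular_iff_fintype A).mp hA ι f g
  rw [← hs]
  cases s <;> simp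

theorem IsTotallyUnimodular.abs_det_submatrix_eq_one {A : Matrix m n R}
    (hA : A.IsTotallyUnimodular) {ι : Type*} [Fintype ι] [DecidableEq ι] {f : ι → m}
    {g : ι → n} (h : IsUnit (A.submatrix f g).det) : |(A.submatrix f g).det| = 1 := by
  obtain ⟨s, hs⟩ := (isTotallyUnimodular_iff_fintype A).mp hA ι f g
  rw [← hs] at h ⊢
  cases s <;> simp at h ⊢

theorem IsTotallyUnimodular.abs_vecMul_inv_submatrix_le_one {A : Matrix m n R}
    (hA : A.IsTotallyUnimodular) {ι : Type*} [Fintype ι] [DecidableEq ι] {f : ι → m}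
    {g : ι → n} (hB : IsUnit (A.submatrix f g).det) (i : m) (p : ι) :
    |((fun q => A i (g q)) ᵥ* (A.submatrix f g)⁻¹) p| ≤ 1 := by
  set B := A.submatrix f g
  have hcramer : B.det * ((fun q => A i (g q)) ᵥ* B⁻¹) p =
      (A.submatrix (Function.update f p i) g).det := by
    rw [← smul_eq_mul, ← Pi.smul_apply, det_smul_inv_vecMul_eq_cramer_transpose _ _ hB,
      cramer_transpose_apply]
    congr 1
    ext q j
    by_cases hq : q = p <;> simp [B, updateRow_apply, hq]
  have := hA.abs_det_submatrix_le_one (Function.update f p i) g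
  rwa [← hcramer, abs_mul, hA.abs_det_submatrix_eq_one hB, one_mul] at this

theorem mul_submatrix_one_id {S : Type*} [Semiring S] [Fintype n] [DecidableEq n] {ι : Type*}
    (A : Matrix m n S) (g : ι → n) :
    A * (1 : Matrix n n S).submatrix id g = A.submatrix id g := by
  ext i q
  simp [mul_apply, one_apply]

theorem dotProduct_eq_of_mem_span {S : Type*} [CommSemiring S] [Fintype n] {s : Set (n → S)}
    {v x x' : n → S} (hv : v ∈ Submodule.span S s) (h : ∀ u ∈ s, u ⬝ᵥ x = u ⬝ᵥ x') :
    v ⬝ᵥ x = v ⬝ᵥ x' :=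
  LinearMap.eqOn_span' (f := (dotProductBilin S S).flip x) (g := (dotProductBilin S S).flip x')
    h hv

theorem abs_dotProduct_le_sum_abs [Fintype n] {z c : n → R} (hz : ∀ p, |z p| ≤ 1) :
    |z ⬝ᵥ c| ≤ ∑ p, |c p| :=
  (Finset.abs_sum_le_sum_abs _ _).trans <| Finset.sum_le_sum fun p _ => by
    rw [abs_mul]; exact mul_le_of_le_one_left (abs_nonneg _) (hz p)

theorem IsTotallyUnimodular.exists_eqOn_abs_dotProduct_le {K : Type*} [Field K] [LinearOrder K]
    [IsStrictOrderedRing K] [Fintype n] [DecidableEq n] {A : Matrix m n K}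
    (hA : A.IsTotallyUnimodular) (S : Finset m) (x : n → K) :
    ∃ x' : n → K, (∀ i ∈ S, A i ⬝ᵥ x' = A i ⬝ᵥ x) ∧
      ∀ i, |A i ⬝ᵥ x'| ≤ ∑ j ∈ S, |A j ⬝ᵥ x| := by
  classical
  obtain ⟨κ, a, ha, hspan, hli⟩ := exists_linearIndependent' K (fun j : S => A j)
  have : Fintype κ := Fintype.ofInjective a ha
  set e : κ → m := (↑) ∘ a
  obtain ⟨g, hg⟩ := exists_isUnit_det_submatrix_of_linearIndependent (A.submatrix e id) hli
  set B := A.submatrix e g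
  replace hg : IsUnit B.det := hg
  set c : κ → K := fun q => A (e q) ⬝ᵥ x
  -- `B⁻¹ c` placed on the columns `g`, zero elsewhere
  set x' := (1 : Matrix n n K).submatrix id g *ᵥ (B⁻¹ *ᵥ c)
  have hx' : ∀ i, A i ⬝ᵥ x' = (fun q => A i (g q)) ⬝ᵥ (B⁻¹ *ᵥ c) := fun i => by
    have : A *ᵥ x' = A.submatrix id g *ᵥ (B⁻¹ *ᵥ c) := by
      rw [mulVec_mulVec, mul_submatrix_one_id]
    exact congrFun this i
  refine ⟨x', fun i hi => ?_, fun i => ?_⟩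
  · have hrows : ∀ q, A (e q) ⬝ᵥ x' = c q := fun q => by
      rw [hx']
      exact congrFun (show B *ᵥ (B⁻¹ *ᵥ c) = c by
        rw [mulVec_mulVec, mul_nonsing_inv _ hg, one_mulVec]) q
    refine dotProduct_eq_of_mem_span (s := Set.range (A ∘ e)) ?_ ?_
    · rw [show A ∘ e = (fun j : S => A j) ∘ a from rfl, hspan]
      exact Submodule.subset_span ⟨⟨i, hi⟩, rfl⟩
    · rintro _ ⟨q, rfl⟩
      exact hrows q
  · rw [hx', dotProduct_mulVec]
    calc _ ≤ ∑ q, |c q| := abs_dotProduct_le_sum_abs (hA.abs_vecMul_inv_submatrix_le_one hg i)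
      _ = ∑ j ∈ Finset.univ.map ⟨a, ha⟩, |A j ⬝ᵥ x| := by rw [Finset.sum_map]; rfl
      _ ≤ ∑ j : S, |A j ⬝ᵥ x| := Finset.sum_le_univ_sum_of_nonneg fun _ => abs_nonneg _
      _ = ∑ j ∈ S, |A j ⬝ᵥ x| := Finset.sum_coe_sort S fun j => |A j ⬝ᵥ x|

end Matrix

theorem csInf_image_eq_of_isMinOn {α β : Type*} [ConditionallyCompleteLattice β] {f : α → β}
    {s t : Set α} {a : α} (hmin : IsMinOn f s a) (ha : a ∈ t) (hts : t ⊆ s) :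
    sInf (f '' s) = sInf (f '' t) := by
  rw [isMinOn_iff] at hmin
  rw [IsLeast.csInf_eq ⟨Set.mem_image_of_mem f (hts ha), Set.forall_mem_image.2 hmin⟩,
    IsLeast.csInf_eq
      ⟨Set.mem_image_of_mem f ha, Set.forall_mem_image.2 fun x hx => hmin x (hts hx)⟩]

theorem exists_mem_feasSet_abs_le_one_l0Obj_le {m n : ℕ} {A : Matrix (Fin m) (Fin n) ℝ}
    (hA : A.IsTotallyUnimodular) {k : Fin m} {I : Finset (Fin m)} {x₀ : Fin n → ℝ}
    (hx₀ : x₀ ∈ feasSet A k I) :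
    ∃ x ∈ feasSet A k I, (∀ i, |A i ⬝ᵥ x| ≤ 1) ∧ l0Obj A I x ≤ l0Obj A I x₀ := by
  classical
  obtain ⟨x, hx, hbound⟩ :=
    hA.exists_eqOn_abs_dotProduct_le {i | A i ⬝ᵥ x₀ = 0 ∨ i = k} x₀
  have hzero : ∀ i, A i ⬝ᵥ x₀ = 0 → A i ⬝ᵥ x = 0 := fun i hi =>
    (hx i (by simp [hi])).trans hi
  have hsum : ∑ j ∈ {i | A i ⬝ᵥ x₀ = 0 ∨ i = k}, |A j ⬝ᵥ x₀| = 1 := by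
    rw [Finset.sum_eq_single k (fun j hj hjk => by
      rw [(Finset.mem_filter.1 hj).2.resolve_right hjk, abs_zero]) (by simp), hx₀.1, abs_one]
  refine ⟨x, ⟨?_, fun i hi => hzero i (hx₀.2 i hi)⟩, fun i => hsum ▸ hbound i, ?_⟩
  · rw [hx k (by simp), hx₀.1]
  · unfold l0Obj
    exact Finset.card_le_card (Finset.monotone_filter_right _ fun i _ hi h => hi (hzero i h))

theorem stmt4_general {m n : ℕ} (A : Matrix (Fin m) (Fin n) ℝ) (hA : A.IsTotallyUnimodular)
    (k : Fin m) (I : Finset (Fin m))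
    (hne : (feasSet A k I).Nonempty) :
    (∃ x ∈ feasSet A k I,
      (∀ i : Fin m, |A.mulVec x i| ≤ 1) ∧
      ∀ x' ∈ feasSet A k I, l0Obj A I x ≤ l0Obj A I x') ∧
    sInf {v : ℕ | ∃ x ∈ feasSet A k I, l0Obj A I x = v} =
      sInf {v : ℕ | ∃ x ∈ feasSet A k I, (∀ i : Fin m, |A.mulVec x i| ≤ 1) ∧
        l0Obj A I x = v} := by
  obtain ⟨x, hx, hbound, hle⟩ := exists_mem_feasSet_abs_le_one_l0Obj_le hA
    (Function.argminOn_mem (l0Obj A I) (feasSet A k I) hne)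
  have hmin : IsMinOn (l0Obj A I) (feasSet A k I) x := fun x' hx' =>
    hle.trans (Function.argminOn_le (l0Obj A I) (feasSet A k I) hx')
  refine ⟨⟨x, hx, hbound, hmin⟩, ?_⟩
  convert csInf_image_eq_of_isMinOn hmin (t := {x ∈ feasSet A k I | ∀ i, |A.mulVec x i| ≤ 1})
    ⟨hx, hbound⟩ (Set.sep_subset _ _) using 1
  · rfl
  · exact congrArg sInf (Set.ext fun v => by simp [and_assoc])

/-- If `A` is totally unimodular and `F` is nonempty, then there exists `x* ∈ F` with
`‖A x*‖_∞ ≤ 1` minimizing the l0 objective over all of `F`; consequently the l0 minimum over `F`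
equals the l0 minimum over `{x ∈ F : ‖A x‖_∞ ≤ 1}`. -/
theorem stmt4 {m n : ℕ} (A : Matrix (Fin m) (Fin n) ℝ) (hA : A.IsTotallyUnimodular)
    (k : Fin m) (I : Finset (Fin m)) (hk : k ∉ I)
    (hne : (feasSet A k I).Nonempty) :
    (∃ x ∈ feasSet A k I,
      (∀ i : Fin m, |A.mulVec x i| ≤ 1) ∧
      ∀ x' ∈ feasSet A k I, l0Obj A I x ≤ l0Obj A I x') ∧
    sInf {v : ℕ | ∃ x ∈ feasSet A k I, l0Obj A I x = v} =
      sInf {v : ℕ | ∃ x ∈ feasSet A k I, (∀ i : Fin m, |A.mulVec x i| ≤ 1) ∧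
        l0Obj A I x = v} :=
  stmt4_general A hA k I hne
end

section
/- Let H be a real m×n matrix, k ∈ {1,…,m} with H(k,:) ≠ 0 and rank(H) = n, and let θ* minimize ‖Hθ‖₀ over all θ ∈ ℝⁿ with H(k,:)θ = 1. Define J_{θ*} = {i ∈ {1,…,m} : H(i,:)θ* ≠ 0}. Then k ∈ J_{θ*}, rank(H(J̄_{θ*},:)) < n, rank(H(J̄_{θ*} ∪ {k},:)) = n, and |J_{θ*}| = ‖Hθ*‖₀. -/
open Matrix

/-- The submatrix of `H` consisting of the rows indexed by the finite set `S`. -/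
def rowSub {m n : ℕ} (H : Matrix (Fin m) (Fin n) ℝ) (S : Finset (Fin m)) :
    Matrix {i : Fin m // i ∈ S} (Fin n) ℝ :=
  Matrix.of fun i j => H i.1 j

open Classical in
/-- `‖Hθ‖₀`: the number of nonzero entries of `Hθ`. -/
noncomputable def l0Full {m n : ℕ} (H : Matrix (Fin m) (Fin n) ℝ) (θ : Fin n → ℝ) : ℕ :=
  (Finset.univ.filter fun i => H.mulVec θ i ≠ 0).card

/-! The proof is the usual support-reduction argument. If the rows outside `J` together with row
`k` had a common nonzero kernel vector `v`, then, `H` being injective, `Hv` is nonzero at some row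
`i₀`, necessarily in `J`; moving `θ*` along `v` keeps `H(k,:)θ = 1` and the zeros outside `J`, and
kills the entry `i₀`, contradicting the minimality of `‖Hθ*‖₀`. -/

namespace Matrix

variable {ι κ K : Type*} [Field K] [Fintype κ]

theorem rank_lt_card_width_iff (A : Matrix ι κ K) :
    A.rank < Fintype.card κ ↔ ∃ v, v ≠ 0 ∧ A *ᵥ v = 0 := by
  rw [Matrix.rank, ← Module.finrank_fintype_fun_eq_card K,
    ← A.mulVecLin.finrank_range_add_finrank_ker, lt_add_iff_pos_right, Nat.pos_iff_ne_zero,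
    Ne, Submodule.finrank_eq_zero, ← Ne, Submodule.ne_bot_iff]
  simp only [LinearMap.mem_ker, mulVecLin_apply]
  exact exists_congr fun v => and_comm

theorem mulVec_ne_zero_of_rank_eq_card_width {A : Matrix ι κ K} (hA : A.rank = Fintype.card κ)
    {v : κ → K} (hv : v ≠ 0) : A *ᵥ v ≠ 0 :=
  fun hAv => hA.not_lt ((rank_lt_card_width_iff A).2 ⟨v, hv, hAv⟩)

end Matrix

open Classical in
theorem Finset.card_filter_sub_div_mul_lt {ι K : Type*} [Fintype ι] [Field K] {u w : ι → K}
    (hsupp : ∀ i, u i = 0 → w i = 0) {i₀ : ι} (hi₀ : w i₀ ≠ 0) :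
    (univ.filter fun i => u i - u i₀ / w i₀ * w i ≠ 0).card <
      (univ.filter fun i => u i ≠ 0).card := by
  refine card_lt_card ((ssubset_iff_of_subset fun i => ?_).2 ⟨i₀, ?_, ?_⟩)
  · simp only [mem_filter, mem_univ, true_and]
    intro hi hu
    exact hi (by rw [hu, hsupp i hu, mul_zero, sub_zero])
  · simpa using fun hu => hi₀ (hsupp i₀ hu)
  · simp [div_mul_cancel₀ _ hi₀]

theorem l0Full_sub_smul_lt {m n : ℕ} {H : Matrix (Fin m) (Fin n) ℝ} {θ v : Fin n → ℝ}
    (hsupp : ∀ i, H i ⬝ᵥ θ = 0 → H i ⬝ᵥ v = 0) {i₀ : Fin m} (hi₀ : H i₀ ⬝ᵥ v ≠ 0) :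
    l0Full H (θ - (H i₀ ⬝ᵥ θ / H i₀ ⬝ᵥ v) • v) < l0Full H θ := by
  simp only [l0Full, mulVec_sub, mulVec_smul, Pi.sub_apply, Pi.smul_apply, smul_eq_mul]
  exact Finset.card_filter_sub_div_mul_lt (u := H *ᵥ θ) (w := H *ᵥ v) hsupp hi₀

theorem rowSub_mulVec_eq_zero_iff {m n : ℕ} {H : Matrix (Fin m) (Fin n) ℝ} {S : Finset (Fin m)}
    {v : Fin n → ℝ} : rowSub H S *ᵥ v = 0 ↔ ∀ i ∈ S, H i ⬝ᵥ v = 0 := by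
  rw [funext_iff, Subtype.forall]
  rfl

open Classical in
theorem stmt8_general {m n : ℕ} (H : Matrix (Fin m) (Fin n) ℝ) (k : Fin m)
    (hrank : H.rank = n)
    (θs : Fin n → ℝ) (hfeas : H k ⬝ᵥ θs = 1)
    (hopt : ∀ θ' : Fin n → ℝ, H k ⬝ᵥ θ' = 1 → l0Full H θs ≤ l0Full H θ')
    (J : Finset (Fin m)) (hJ : J = Finset.univ.filter fun i => H.mulVec θs i ≠ 0) :
    k ∈ J ∧ (rowSub H Jᶜ).rank < n ∧ (rowSub H (insert k Jᶜ)).rank = n ∧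
      J.card = l0Full H θs := by
  have not_mem_J : ∀ i, i ∉ J ↔ H i ⬝ᵥ θs = 0 := fun i => by
    rw [hJ]
    simp only [Finset.mem_filter, Finset.mem_univ, true_and, not_not]
    rfl
  have hkJ : k ∈ J := by
    by_contra hk
    rw [(not_mem_J k).1 hk] at hfeas
    exact zero_ne_one hfeas
  refine ⟨hkJ, ?_, ?_, by rw [hJ, l0Full]⟩
  · have hθs : θs ≠ 0 := by rintro rfl; simp at hfeas
    simpa using (rank_lt_card_width_iff (rowSub H Jᶜ)).2 ⟨θs, hθs, rowSub_mulVec_eq_zero_iff.2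
      fun i hi => (not_mem_J i).1 (Finset.mem_compl.1 hi)⟩
  refine le_antisymm (by simpa using rank_le_card_width (rowSub H (insert k Jᶜ))) ?_
  by_contra! hlt
  obtain ⟨v, hv0, hv⟩ := (rank_lt_card_width_iff (rowSub H (insert k Jᶜ))).1
    (by simpa using hlt)
  rw [rowSub_mulVec_eq_zero_iff] at hv
  have hsupp (i : Fin m) (hi : H i ⬝ᵥ θs = 0) : H i ⬝ᵥ v = 0 :=
    hv i (Finset.mem_insert_of_mem (Finset.mem_compl.2 ((not_mem_J i).2 hi)))
  obtain ⟨i₀, hi₀⟩ := Function.ne_iff.1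
    (mulVec_ne_zero_of_rank_eq_card_width (by simpa using hrank) hv0)
  have hfeas' : H k ⬝ᵥ (θs - (H i₀ ⬝ᵥ θs / H i₀ ⬝ᵥ v) • v) = 1 := by
    simp [dotProduct_sub, hfeas, hv k (Finset.mem_insert_self _ _)]
  exact (l0Full_sub_smul_lt hsupp hi₀).not_ge (hopt _ hfeas')

open Classical in
/-- If `θ*` minimizes `‖Hθ‖₀` subject to `H(k,:)θ = 1`, where `H(k,:) ≠ 0` and `rank H = n`,
then the support `J_{θ*} = {i : H(i,:)θ* ≠ 0}` contains `k`, satisfies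
`rank(H(J̄_{θ*},:)) < n` and `rank(H(J̄_{θ*} ∪ {k},:)) = n`, and `|J_{θ*}| = ‖Hθ*‖₀`. -/
theorem stmt8 {m n : ℕ} (H : Matrix (Fin m) (Fin n) ℝ) (k : Fin m)
    (hrow : H k ≠ 0) (hrank : H.rank = n)
    (θs : Fin n → ℝ) (hfeas : H k ⬝ᵥ θs = 1)
    (hopt : ∀ θ' : Fin n → ℝ, H k ⬝ᵥ θ' = 1 → l0Full H θs ≤ l0Full H θ')
    (J : Finset (Fin m)) (hJ : J = Finset.univ.filter fun i => H.mulVec θs i ≠ 0) :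
    k ∈ J ∧ (rowSub H Jᶜ).rank < n ∧ (rowSub H (insert k Jᶜ)).rank = n ∧
      J.card = l0Full H θs :=
  stmt8_general H k hrank θs hfeas hopt J hJ
end
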